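/- arXiv:0905.0823 — 5 statements merged into one kernel-verified Lean document; each statement's English description precedes it below -/
import Mathlib

section
/- Let ξ₁ > 1 > ξ₂ > 0 be the roots of q₀ξ² - (p₀+q₀+Ns₀)ξ + p₀ = 0 where p₀, q₀, s₀ > 0, r₀ ≥ 0, p₀+q₀+r₀+s₀ = 1, N > 1 integer. Let D = √((p₀+q₀+Ns₀)² - 4p₀q₀), let 0 ≤ i₀ < N, and define x_{kN} = ((i₀q₀ξ₂/p₀) + N - i₀)ξ₁^k / D for k ≤ 0 and x_{kN} = ((i₀q₀ξ₁/p₀) + N - i₀)ξ₂^k / D for k ≥ 1. Then for all integers k, q₀x_{(k+1)N} - (p₀+q₀+Ns₀)x_{kN} + p₀x_{(k-1)N} = (i₀-N)δ(k,0) - i₀δ(k,1), where δ is the Kronecker delta. -/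
/-!
Both branches of `x` are geometric sequences `A ξ₁ᵏ` and `B ξ₂ᵏ` in roots of the characteristic
polynomial, so the recurrence holds away from the seam `k ∈ {0, 1}`. There the root equations
leave the defects `q₀ (B ξ₂ - A ξ₁)` and `p₀ (A - B)`, and Vieta's formulas give
`D = q₀ (ξ₁ - ξ₂)`, which turns them into `i₀ - N` and `-i₀`.
-/

section GeometricSolutions

variable {K : Type*} [Field K] {a b c ξ ξ₁ ξ₂ : K}

theorem quadratic_vieta_of_roots_ne (h₁ : a * ξ₁ ^ 2 - b * ξ₁ + c = 0)
    (h₂ : a * ξ₂ ^ 2 - b * ξ₂ + c = 0) (hne : ξ₁ ≠ ξ₂) :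
    b = a * (ξ₁ + ξ₂) ∧ c = a * ξ₁ * ξ₂ := by
  have hsum : b = a * (ξ₁ + ξ₂) := by
    have h : (a * (ξ₁ + ξ₂) - b) * (ξ₁ - ξ₂) = 0 := by linear_combination h₁ - h₂
    exact (sub_eq_zero.1 ((mul_eq_zero.1 h).resolve_right (sub_ne_zero.2 hne))).symm
  exact ⟨hsum, by linear_combination h₁ + ξ₁ * hsum⟩

theorem zpow_recurrence_of_root (hξ : ξ ≠ 0) (h : a * ξ ^ 2 - b * ξ + c = 0) (m : ℤ) :
    a * ξ ^ (m + 1) - b * ξ ^ m + c * ξ ^ (m - 1) = 0 := by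
  have hm : ξ ^ m = ξ ^ (m - 1) * ξ := by rw [← zpow_add_one₀ hξ, sub_add_cancel]
  rw [zpow_add_one₀ hξ, hm]
  linear_combination ξ ^ (m - 1) * h

theorem glued_geometric_recurrence {A B : K} {x : ℤ → K}
    (h₁ : a * ξ₁ ^ 2 - b * ξ₁ + c = 0) (h₂ : a * ξ₂ ^ 2 - b * ξ₂ + c = 0)
    (hξ₁ : ξ₁ ≠ 0) (hξ₂ : ξ₂ ≠ 0)
    (hx : ∀ k : ℤ, x k = if k ≤ 0 then A * ξ₁ ^ k else B * ξ₂ ^ k) (k : ℤ) :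
    a * x (k + 1) - b * x k + c * x (k - 1) =
      a * (B * ξ₂ - A * ξ₁) * (if k = 0 then 1 else 0) +
        c * (A - B) * (if k = 1 then 1 else 0) := by
  rcases lt_trichotomy k 0 with hk | rfl | hk
  · simp only [hx, if_pos (show k + 1 ≤ 0 by omega), if_pos hk.le,
      if_pos (show k - 1 ≤ 0 by omega), if_neg hk.ne, if_neg (show k ≠ 1 by omega)]
    linear_combination A * zpow_recurrence_of_root hξ₁ h₁ k
  · norm_num [hx]
    field_simp
    linear_combination A * h₁
  · obtain rfl | hk1 := (Int.add_one_le_iff.2 hk).eq_or_lt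
    · norm_num [hx]
      linear_combination B * h₂
    · simp only [hx, if_neg (show ¬k + 1 ≤ 0 by omega), if_neg (show ¬k ≤ 0 by omega),
        if_neg (show ¬k - 1 ≤ 0 by omega), if_neg hk.ne', if_neg (show k ≠ 1 by omega)]
      linear_combination B * zpow_recurrence_of_root hξ₂ h₂ k

end GeometricSolutions

theorem sqrt_discrim_eq_of_roots {a b c ξ₁ ξ₂ : ℝ} (ha : 0 < a) (hlt : ξ₂ < ξ₁)
    (h₁ : a * ξ₁ ^ 2 - b * ξ₁ + c = 0) (h₂ : a * ξ₂ ^ 2 - b * ξ₂ + c = 0) :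
    √(b ^ 2 - 4 * c * a) = a * (ξ₁ - ξ₂) := by
  obtain ⟨rfl, rfl⟩ := quadratic_vieta_of_roots_ne h₁ h₂ hlt.ne'
  rw [show (a * (ξ₁ + ξ₂)) ^ 2 - 4 * (a * ξ₁ * ξ₂) * a = (a * (ξ₁ - ξ₂)) ^ 2 by ring]
  exact Real.sqrt_sq (mul_pos ha (sub_pos.2 hlt)).le

theorem stmt_6_general (p₀ q₀ s₀ : ℝ) (N : ℕ) (i₀ : ℤ) (ξ₁ ξ₂ D : ℝ)
    (hp : 0 < p₀) (hq : 0 < q₀)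
    (hξ₁ : q₀ * ξ₁ ^ 2 - (p₀ + q₀ + N * s₀) * ξ₁ + p₀ = 0) (hξ₁1 : ξ₁ > 1)
    (hξ₂ : q₀ * ξ₂ ^ 2 - (p₀ + q₀ + N * s₀) * ξ₂ + p₀ = 0) (hξ₂1 : ξ₂ < 1) (hξ₂0 : 0 < ξ₂)
    (hD : D = Real.sqrt ((p₀ + q₀ + N * s₀) ^ 2 - 4 * p₀ * q₀))
    (x : ℤ → ℝ)
    (hx : ∀ k : ℤ, x k = if k ≤ 0
      then ((i₀ * q₀ * ξ₂ / p₀) + N - i₀) * ξ₁ ^ k / D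
      else ((i₀ * q₀ * ξ₁ / p₀) + N - i₀) * ξ₂ ^ k / D) :
    ∀ k : ℤ, q₀ * x (k + 1) - (p₀ + q₀ + N * s₀) * x k + p₀ * x (k - 1) =
      ((i₀ : ℝ) - N) * (if k = 0 then 1 else 0) - i₀ * (if k = 1 then 1 else 0) := by
  have hlt : ξ₂ < ξ₁ := hξ₂1.trans hξ₁1
  have hD' : D = q₀ * (ξ₁ - ξ₂) := hD.trans (sqrt_discrim_eq_of_roots hq hlt hξ₁ hξ₂)
  have hD0 : D ≠ 0 := hD' ▸ (mul_pos hq (sub_pos.2 hlt)).ne'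
  intro k
  rw [glued_geometric_recurrence (A := (i₀ * q₀ * ξ₂ / p₀ + N - i₀) / D)
    (B := (i₀ * q₀ * ξ₁ / p₀ + N - i₀) / D) hξ₁ hξ₂ (zero_lt_one.trans hξ₁1).ne' hξ₂0.ne'
    (fun k => (hx k).trans (by split_ifs <;> ring)) k]
  have hseam₀ : q₀ * ((i₀ * q₀ * ξ₁ / p₀ + N - i₀) / D * ξ₂ -
      (i₀ * q₀ * ξ₂ / p₀ + N - i₀) / D * ξ₁) = (i₀ : ℝ) - N := by
    field_simp
    rw [hD']
    ring
  have hseam₁ : p₀ * ((i₀ * q₀ * ξ₂ / p₀ + N - i₀) / D - (i₀ * q₀ * ξ₁ / p₀ + N - i₀) / D)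
      = -i₀ := by
    field_simp
    rw [hD']
    ring
  rw [hseam₀, hseam₁]
  ring

theorem stmt_6 (p₀ q₀ r₀ s₀ : ℝ) (N : ℕ) (i₀ : ℤ) (ξ₁ ξ₂ D : ℝ)
    (hp : 0 < p₀) (hq : 0 < q₀) (hs : 0 < s₀) (hr : 0 ≤ r₀)
    (hsum : p₀ + q₀ + r₀ + s₀ = 1) (hN : 1 < N) (hi₀ : 0 ≤ i₀) (hi₀N : i₀ < N)
    (hξ₁ : q₀ * ξ₁ ^ 2 - (p₀ + q₀ + N * s₀) * ξ₁ + p₀ = 0) (hξ₁1 : ξ₁ > 1)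
    (hξ₂ : q₀ * ξ₂ ^ 2 - (p₀ + q₀ + N * s₀) * ξ₂ + p₀ = 0) (hξ₂1 : ξ₂ < 1) (hξ₂0 : 0 < ξ₂)
    (hD : D = Real.sqrt ((p₀ + q₀ + N * s₀) ^ 2 - 4 * p₀ * q₀))
    (x : ℤ → ℝ)
    (hx : ∀ k : ℤ, x k = if k ≤ 0
      then ((i₀ * q₀ * ξ₂ / p₀) + N - i₀) * ξ₁ ^ k / D
      else ((i₀ * q₀ * ξ₁ / p₀) + N - i₀) * ξ₂ ^ k / D) :
    ∀ k : ℤ, q₀ * x (k + 1) - (p₀ + q₀ + N * s₀) * x k + p₀ * x (k - 1) =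
      ((i₀ : ℝ) - N) * (if k = 0 then 1 else 0) - i₀ * (if k = 1 then 1 else 0) :=
  stmt_6_general p₀ q₀ s₀ N i₀ ξ₁ ξ₂ D hp hq hξ₁ hξ₁1 hξ₂ hξ₂1 hξ₂0 hD x hx
end

section
/- With notation as in the ρ = 1 case of Theorem 1 (p = q, barriers (p₀,q₀,r₀,s₀) at multiples of N, start at i₀ with 0 ≤ i₀ < N), the sequence x_{kN} = ((i₀q₀ξ₂/p₀)+N-i₀)ξ₁^k/D for k ≤ 0 and x_{kN} = ((i₀q₀ξ₁/p₀)+N-i₀)ξ₂^k/D for k ≥ 1 is the unique bounded solution of the difference equation q₀x_{(k+1)N} - (p₀+q₀+Ns₀)x_{kN} + p₀x_{(k-1)N} = (i₀-N)δ(k,0) - i₀δ(k,1) over k ∈ ℤ. -/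
/-!
Writing the characteristic polynomial as `q (X - ξ₁)(X - ξ₂)`, the shift operator factors and a
bounded solution `z` of the homogeneous recurrence gives first the bounded sequence
`z (k + 1) - ξ₂ z k`, which is geometric of ratio `ξ₁ > 1` and hence zero, and then `z` itself,
which is geometric of ratio `ξ₂⁻¹ > 1` towards `-∞` and hence zero. This gives uniqueness. The
explicit solution is geometric on `k ≤ 0` and on `k ≥ 1`, so the recurrence only has to be checked
at the two seams `k = 0` and `k = 1`, and it is bounded since `|ξ₁| > 1 > |ξ₂|`.
-/

lemma vieta_of_quadratic_roots {q A p ξ₁ ξ₂ : ℝ} (hne : ξ₁ ≠ ξ₂)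
    (h₁ : q * ξ₁ ^ 2 - A * ξ₁ + p = 0) (h₂ : q * ξ₂ ^ 2 - A * ξ₂ + p = 0) :
    A = q * (ξ₁ + ξ₂) ∧ p = q * ξ₁ * ξ₂ := by
  have hA : A = q * (ξ₁ + ξ₂) := by
    have h : (A - q * (ξ₁ + ξ₂)) * (ξ₁ - ξ₂) = 0 := by linear_combination h₂ - h₁
    linarith [(mul_eq_zero.mp h).resolve_right (sub_ne_zero.mpr hne)]
  exact ⟨hA, by linear_combination h₁ + ξ₁ * hA⟩

lemma eq_zero_of_bounded_of_succ_eq_mul {r : ℝ} (hr : 1 < |r|) {u : ℤ → ℝ}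
    (hu : ∀ k, u (k + 1) = r * u k) (hbdd : ∃ M, ∀ k, |u k| ≤ M) : u = 0 := by
  obtain ⟨M, hM⟩ := hbdd
  have hiter : ∀ k (n : ℕ), u (k + n) = r ^ n * u k := by
    intro k n
    induction n with
    | zero => simp
    | succ n ih => rw [Nat.cast_succ, ← add_assoc, hu, ih, pow_succ]; ring
  funext k
  by_contra hk
  have hpos : 0 < |u k| := abs_pos.mpr hk
  obtain ⟨n, hn⟩ := pow_unbounded_of_one_lt (M / |u k|) hr
  have hle := hM (k + n)
  rw [hiter, abs_mul, abs_pow] at hle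
  rw [div_lt_iff₀ hpos] at hn
  linarith

lemma eq_zero_of_bounded_of_recurrence {a b : ℝ} (ha : 1 < |a|) (hb₀ : b ≠ 0) (hb : |b| < 1)
    {z : ℤ → ℝ} (hz : ∀ k, z (k + 1) - (a + b) * z k + a * b * z (k - 1) = 0)
    (hbdd : ∃ M, ∀ k, |z k| ≤ M) : z = 0 := by
  obtain ⟨M, hM⟩ := hbdd
  have hw : (fun k => z (k + 1) - b * z k) = 0 := by
    refine eq_zero_of_bounded_of_succ_eq_mul ha (fun k => ?_) ⟨M + |b| * M, fun k => ?_⟩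
    · linear_combination (by simpa using hz (k + 1) : _ = (0 : ℝ))
    · calc |z (k + 1) - b * z k| ≤ |z (k + 1)| + |b| * |z k| := by
            rw [← abs_mul]; exact abs_sub _ _
        _ ≤ M + |b| * M := by gcongr <;> exact hM _
  have hv : (fun k => z (-k)) = 0 := by
    refine eq_zero_of_bounded_of_succ_eq_mul (r := b⁻¹) ?_ (fun k => ?_) ⟨M, fun k => hM _⟩
    · rw [abs_inv]; exact (one_lt_inv₀ (abs_pos.mpr hb₀)).mpr hb
    · have h := congrFun hw (-k - 1)
      simp only [sub_add_cancel, Pi.zero_apply] at h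
      rw [neg_add']
      field_simp
      linear_combination -h
  funext k
  simpa using congrFun hv (-k)

lemma zpow_recurrence_eq_zero {q A p r : ℝ} (hr : r ≠ 0) (hroot : q * r ^ 2 - A * r + p = 0)
    (k : ℤ) : q * r ^ (k + 1) - A * r ^ k + p * r ^ (k - 1) = 0 := by
  have h : r ^ k = r ^ (k - 1) * r := by rw [← zpow_add_one₀ hr, sub_add_cancel]
  rw [zpow_add_one₀ hr, h]
  linear_combination r ^ (k - 1) * hroot

lemma piecewise_zpow_recurrence {q A p ξ₁ ξ₂ c₁ c₂ D : ℝ} (hξ₁ : ξ₁ ≠ 0) (hξ₂ : ξ₂ ≠ 0)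
    (h₁ : q * ξ₁ ^ 2 - A * ξ₁ + p = 0) (h₂ : q * ξ₂ ^ 2 - A * ξ₂ + p = 0) {x : ℤ → ℝ}
    (hx : ∀ k, x k = if k ≤ 0 then c₁ * ξ₁ ^ k / D else c₂ * ξ₂ ^ k / D) (k : ℤ) :
    q * x (k + 1) - A * x k + p * x (k - 1) =
      q * (c₂ * ξ₂ - c₁ * ξ₁) / D * (if k = 0 then 1 else 0) +
        p * (c₁ - c₂) / D * (if k = 1 then 1 else 0) := by
  rcases lt_trichotomy k 0 with hk | rfl | hk
  · simp only [hx, if_pos (by omega : k + 1 ≤ 0), if_pos hk.le, if_pos (by omega : k - 1 ≤ 0),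
      if_neg hk.ne, if_neg (by omega : k ≠ 1)]
    linear_combination c₁ / D * zpow_recurrence_eq_zero hξ₁ h₁ k
  · simp only [hx, zero_add, zero_sub, le_refl, if_true, if_neg one_pos.not_ge,
      if_pos (by norm_num : (-1 : ℤ) ≤ 0), if_neg zero_ne_one, zpow_one, zpow_zero, zpow_neg_one]
    field_simp
    linear_combination c₁ / D * h₁
  · obtain rfl | hk1 := (by omega : k = 1 ∨ 1 < k)
    · simp only [hx, one_add_one_eq_two, sub_self, le_refl, if_true, if_neg one_pos.not_ge,
        if_neg two_pos.not_ge, if_neg one_ne_zero, zpow_one, zpow_zero]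
      field_simp
      linear_combination c₂ / D * h₂
    · simp only [hx, if_neg (by omega : ¬k + 1 ≤ 0), if_neg (by omega : ¬k ≤ 0),
        if_neg (by omega : ¬k - 1 ≤ 0), if_neg (by omega : k ≠ 0), if_neg hk1.ne']
      linear_combination c₂ / D * zpow_recurrence_eq_zero hξ₂ h₂ k

lemma exists_abs_le_piecewise_zpow {a b c d D : ℝ} (ha : 1 ≤ a) (hb₀ : 0 < b) (hb : b ≤ 1)
    {x : ℤ → ℝ} (hx : ∀ k, x k = if k ≤ 0 then c * a ^ k / D else d * b ^ k / D) :
    ∃ M, ∀ k, |x k| ≤ M := by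
  refine ⟨|c / D| + |d / D|, fun k => ?_⟩
  rw [hx]
  split_ifs with hk
  · calc |c * a ^ k / D| = |c / D| * |a ^ k| := by rw [mul_div_right_comm, abs_mul]
      _ ≤ |c / D| := by
        refine mul_le_of_le_one_right (abs_nonneg _) ?_
        rw [abs_of_pos (zpow_pos (by linarith) k)]
        exact zpow_le_one_of_nonpos₀ ha hk
      _ ≤ _ := le_add_of_nonneg_right (abs_nonneg _)
  · calc |d * b ^ k / D| = |d / D| * |b ^ k| := by rw [mul_div_right_comm, abs_mul]
      _ ≤ |d / D| := by
        refine mul_le_of_le_one_right (abs_nonneg _) ?_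
        rw [abs_of_nonneg (zpow_nonneg hb₀.le k)]
        exact zpow_le_one₀ hb₀ hb (by omega)
      _ ≤ _ := le_add_of_nonneg_left (abs_nonneg _)

theorem stmt_7_general (p₀ q₀ s₀ : ℝ) (N : ℕ) (i₀ : ℤ) (ξ₁ ξ₂ D : ℝ)
    (hp : 0 < p₀) (hq : 0 < q₀)
    (hξ₁ : q₀ * ξ₁ ^ 2 - (p₀ + q₀ + N * s₀) * ξ₁ + p₀ = 0) (hξ₁1 : ξ₁ > 1)
    (hξ₂ : q₀ * ξ₂ ^ 2 - (p₀ + q₀ + N * s₀) * ξ₂ + p₀ = 0) (hξ₂1 : ξ₂ < 1) (hξ₂0 : 0 < ξ₂)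
    (hD : D = Real.sqrt ((p₀ + q₀ + N * s₀) ^ 2 - 4 * p₀ * q₀))
    (x : ℤ → ℝ)
    (hx : ∀ k : ℤ, x k = if k ≤ 0
      then ((i₀ * q₀ * ξ₂ / p₀) + N - i₀) * ξ₁ ^ k / D
      else ((i₀ * q₀ * ξ₁ / p₀) + N - i₀) * ξ₂ ^ k / D) :
    ((∀ k : ℤ, q₀ * x (k + 1) - (p₀ + q₀ + N * s₀) * x k + p₀ * x (k - 1) =
        ((i₀ : ℝ) - N) * (if k = 0 then 1 else 0) - i₀ * (if k = 1 then 1 else 0)) ∧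
      (∃ M : ℝ, ∀ k : ℤ, |x k| ≤ M)) ∧
    ∀ y : ℤ → ℝ,
      ((∀ k : ℤ, q₀ * y (k + 1) - (p₀ + q₀ + N * s₀) * y k + p₀ * y (k - 1) =
          ((i₀ : ℝ) - N) * (if k = 0 then 1 else 0) - i₀ * (if k = 1 then 1 else 0)) ∧
        (∃ M : ℝ, ∀ k : ℤ, |y k| ≤ M)) → y = x := by
  have hne : ξ₁ ≠ ξ₂ := (hξ₂1.trans hξ₁1).ne'
  obtain ⟨hA, hP⟩ := vieta_of_quadratic_roots hne hξ₁ hξ₂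
  have hDq : D = q₀ * (ξ₁ - ξ₂) := by
    rw [hD, hA, hP, show (q₀ * (ξ₁ + ξ₂)) ^ 2 - 4 * (q₀ * ξ₁ * ξ₂) * q₀ = (q₀ * (ξ₁ - ξ₂)) ^ 2 by
      ring]
    exact Real.sqrt_sq (mul_nonneg hq.le (by linarith))
  have hsol : ∀ k : ℤ, q₀ * x (k + 1) - (p₀ + q₀ + N * s₀) * x k + p₀ * x (k - 1) =
      ((i₀ : ℝ) - N) * (if k = 0 then 1 else 0) - i₀ * (if k = 1 then 1 else 0) := by
    intro k
    rw [piecewise_zpow_recurrence (by linarith) hξ₂0.ne' hξ₁ hξ₂ hx k, hDq]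
    split_ifs <;> field_simp <;> ring
  obtain ⟨Mx, hMx⟩ := exists_abs_le_piecewise_zpow hξ₁1.le hξ₂0 hξ₂1.le hx
  refine ⟨⟨hsol, Mx, hMx⟩, ?_⟩
  rintro y ⟨hy, My, hMy⟩
  have hz : ∀ k, (y - x) (k + 1) - (ξ₁ + ξ₂) * (y - x) k + ξ₁ * ξ₂ * (y - x) (k - 1) = 0 := by
    intro k
    have h := sub_eq_zero.mpr ((hy k).trans (hsol k).symm)
    rw [hA, hP] at h
    refine (mul_eq_zero.mp (?_ : q₀ * _ = 0)).resolve_left hq.ne'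
    simp only [Pi.sub_apply]
    linear_combination h
  refine sub_eq_zero.mp (eq_zero_of_bounded_of_recurrence ?_ hξ₂0.ne' ?_ hz
    ⟨My + Mx, fun k => (abs_sub _ _).trans (add_le_add (hMy k) (hMx k))⟩)
  · rwa [abs_of_pos (by linarith)]
  · rwa [abs_of_pos hξ₂0]

theorem stmt_7 (p₀ q₀ r₀ s₀ : ℝ) (N : ℕ) (i₀ : ℤ) (ξ₁ ξ₂ D : ℝ)
    (hp : 0 < p₀) (hq : 0 < q₀) (hs : 0 < s₀) (hr : 0 ≤ r₀)
    (hsum : p₀ + q₀ + r₀ + s₀ = 1) (hN : 1 < N) (hi₀ : 0 ≤ i₀) (hi₀N : i₀ < N)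
    (hξ₁ : q₀ * ξ₁ ^ 2 - (p₀ + q₀ + N * s₀) * ξ₁ + p₀ = 0) (hξ₁1 : ξ₁ > 1)
    (hξ₂ : q₀ * ξ₂ ^ 2 - (p₀ + q₀ + N * s₀) * ξ₂ + p₀ = 0) (hξ₂1 : ξ₂ < 1) (hξ₂0 : 0 < ξ₂)
    (hD : D = Real.sqrt ((p₀ + q₀ + N * s₀) ^ 2 - 4 * p₀ * q₀))
    (x : ℤ → ℝ)
    (hx : ∀ k : ℤ, x k = if k ≤ 0
      then ((i₀ * q₀ * ξ₂ / p₀) + N - i₀) * ξ₁ ^ k / D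
      else ((i₀ * q₀ * ξ₁ / p₀) + N - i₀) * ξ₂ ^ k / D) :
    ((∀ k : ℤ, q₀ * x (k + 1) - (p₀ + q₀ + N * s₀) * x k + p₀ * x (k - 1) =
        ((i₀ : ℝ) - N) * (if k = 0 then 1 else 0) - i₀ * (if k = 1 then 1 else 0)) ∧
      (∃ M : ℝ, ∀ k : ℤ, |x k| ≤ M)) ∧
    ∀ y : ℤ → ℝ,
      ((∀ k : ℤ, q₀ * y (k + 1) - (p₀ + q₀ + N * s₀) * y k + p₀ * y (k - 1) =
          ((i₀ : ℝ) - N) * (if k = 0 then 1 else 0) - i₀ * (if k = 1 then 1 else 0)) ∧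
        (∃ M : ℝ, ∀ k : ℤ, |y k| ≤ M)) → y = x :=
  stmt_7_general p₀ q₀ s₀ N i₀ ξ₁ ξ₂ D hp hq hξ₁ hξ₁1 hξ₂ hξ₂1 hξ₂0 hD x hx
end

section
/- Let p₀, q₀, s₀ > 0 with p₀ + q₀ + s₀ ≤ 1, N > 1 an integer, 0 ≤ i₀ < N, ξ₁ > 1 > ξ₂ > 0 the roots of q₀ξ² - (p₀+q₀+Ns₀)ξ + p₀ = 0, and D = √((p₀+q₀+Ns₀)² - 4p₀q₀). Define x_{kN} as in Theorem 1 case ρ = 1. Then s₀·∑_{k=-∞}^{∞} x_{kN} = 1. -/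
theorem stmt_8 (p₀ q₀ s₀ : ℝ) (N : ℕ) (i₀ : ℤ) (ξ₁ ξ₂ D : ℝ)
    (hp : 0 < p₀) (hq : 0 < q₀) (hs : 0 < s₀) (hsum : p₀ + q₀ + s₀ ≤ 1)
    (hN : 1 < N) (hi₀ : 0 ≤ i₀) (hi₀N : i₀ < N)
    (hξ₁ : q₀ * ξ₁ ^ 2 - (p₀ + q₀ + N * s₀) * ξ₁ + p₀ = 0) (hξ₁1 : ξ₁ > 1)
    (hξ₂ : q₀ * ξ₂ ^ 2 - (p₀ + q₀ + N * s₀) * ξ₂ + p₀ = 0) (hξ₂1 : ξ₂ < 1) (hξ₂0 : 0 < ξ₂)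
    (hD : D = Real.sqrt ((p₀ + q₀ + N * s₀) ^ 2 - 4 * p₀ * q₀))
    (x : ℤ → ℝ)
    (hx : ∀ k : ℤ, x k = if k ≤ 0
      then ((i₀ * q₀ * ξ₂ / p₀) + N - i₀) * ξ₁ ^ k / D
      else ((i₀ * q₀ * ξ₁ / p₀) + N - i₀) * ξ₂ ^ k / D) :
    s₀ * ∑' k : ℤ, x k = 1 := by
  have hdiff : (0:ℝ) < ξ₁ - ξ₂ := by linarith
  have hfact : (ξ₁ - ξ₂) * (q₀ * (ξ₁ + ξ₂) - (p₀ + q₀ + N * s₀)) = 0 := by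
    linear_combination hξ₁ - hξ₂
  have hvsum : q₀ * (ξ₁ + ξ₂) = p₀ + q₀ + N * s₀ := by
    rcases mul_eq_zero.mp hfact with h | h
    · linarith
    · linarith
  have hprod : q₀ * (ξ₁ * ξ₂) = p₀ := by
    linear_combination -hξ₁ + ξ₁ * hvsum
  have hDval : D = q₀ * (ξ₁ - ξ₂) := by
    have h1 : (p₀ + q₀ + N * s₀) ^ 2 - 4 * p₀ * q₀ = (q₀ * (ξ₁ - ξ₂)) ^ 2 := by
      linear_combination -(q₀ * (ξ₁ + ξ₂) + (p₀ + q₀ + N * s₀)) * hvsum + 4 * q₀ * hprod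
    rw [hD, h1, Real.sqrt_sq (by positivity)]
  have hD0 : (0:ℝ) < D := by rw [hDval]; positivity
  have hξ₁0 : (0:ℝ) < ξ₁ := by linarith
  set A : ℝ := (i₀ * q₀ * ξ₂ / p₀) + N - i₀ with hA
  set B : ℝ := (i₀ * q₀ * ξ₁ / p₀) + N - i₀ with hB
  have hinv1 : ξ₁⁻¹ < 1 := by
    rw [inv_lt_one_iff₀]; right; exact hξ₁1
  have h1 : HasSum (fun n : ℕ => x n) (B / D * (1 - ξ₂)⁻¹ + (A - B) / D) := by
    have hfun : (fun n : ℕ => x (n : ℤ)) =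
        fun n : ℕ => B / D * ξ₂ ^ n + (if n = 0 then (A - B) / D else 0) := by
      funext n
      rw [hx]
      rcases Nat.eq_zero_or_pos n with h | h
      · subst h; simp; ring
      · have h0 : ¬ ((n : ℤ) ≤ 0) := by exact_mod_cast Nat.not_le.mpr h
        rw [if_neg h0, if_neg h.ne', zpow_natCast]
        ring
    rw [hfun]
    exact ((hasSum_geometric_of_lt_one hξ₂0.le hξ₂1).mul_left (B / D)).add
      (hasSum_ite_eq 0 ((A - B) / D))
  have h2 : HasSum (fun n : ℕ => x (-(n + 1))) (A / D * ξ₁⁻¹ * (1 - ξ₁⁻¹)⁻¹) := by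
    have hfun : (fun n : ℕ => x (-(n + 1))) =
        fun n : ℕ => (A / D * ξ₁⁻¹) * (ξ₁⁻¹) ^ n := by
      funext n
      rw [hx, if_pos (by omega)]
      have : ξ₁ ^ (-((n : ℤ) + 1)) = (ξ₁⁻¹) ^ (n + 1) := by
        rw [zpow_neg, show ((n : ℤ) + 1) = ((n + 1 : ℕ) : ℤ) by push_cast; ring,
          zpow_natCast, ← inv_pow]
      rw [this, pow_succ]
      ring
    rw [hfun]
    exact (hasSum_geometric_of_lt_one (by positivity) hinv1).mul_left _
  have htot := h1.of_nat_of_neg_add_one h2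
  rw [htot.tsum_eq]
  have hAv : A = i₀ / ξ₁ + N - i₀ := by
    rw [hA]
    congr 1
    congr 1
    rw [div_eq_div_iff hp.ne' hξ₁0.ne']
    linear_combination (i₀ : ℝ) * hprod
  have hBv : B = i₀ / ξ₂ + N - i₀ := by
    rw [hB]
    congr 1
    congr 1
    rw [div_eq_div_iff hp.ne' hξ₂0.ne']
    linear_combination (i₀ : ℝ) * hprod
  have hNs : (N : ℝ) * s₀ = q₀ * (ξ₁ - 1) * (1 - ξ₂) := by
    linear_combination hprod - hvsum
  have h1ξ₂ : (1:ℝ) - ξ₂ ≠ 0 := by linarith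
  have h1ξ₁ : (1:ℝ) - ξ₁⁻¹ ≠ 0 := by
    have : ξ₁⁻¹ < 1 := hinv1
    linarith
  have hN0 : (N : ℝ) ≠ 0 := by positivity
  have hξ₁m1 : ξ₁ - 1 ≠ 0 := by linarith
  have hrw : ξ₁⁻¹ * (1 - ξ₁⁻¹)⁻¹ = (ξ₁ - 1)⁻¹ := by
    rw [show (1 - ξ₁⁻¹) = (ξ₁ - 1) / ξ₁ from by field_simp, inv_div]
    rw [div_eq_mul_inv]
    field_simp
  have hs₀eq : s₀ = q₀ * (ξ₁ - 1) * (1 - ξ₂) / N := by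
    field_simp
    linear_combination hNs
  rw [hAv, hBv, hDval, mul_assoc, hrw, hs₀eq]
  field_simp
  ring
end

section
/- Let p, q > 0, p ≠ q, r = 1-p-q ≥ 0, ρ = p/q, λ₁ = max(1,ρ), λ₂ = min(1,ρ). Let p₀,q₀,s₀ > 0, r₀ ≥ 0 with p₀+q₀+r₀+s₀ = 1, N > 1, and ω₀ = (λ₂^N - λ₁^N)(1-r₀) + (λ₁^{N-1} - λ₂^{N-1})(ρq₀ + p₀). Then ω₀² - 4p₀q₀(1-ρ)²ρ^{N-1} > 0, i.e., the characteristic equation q₀ξ² + (ω₀/|1-ρ|)ξ + p₀ρ^{N-1} = 0 has two distinct real roots. -/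
theorem stmt_14 (p q r ρ p₀ q₀ r₀ s₀ ω₀ : ℝ) (N : ℕ)
    (hp : 0 < p) (hq : 0 < q) (hne : p ≠ q) (hr : r = 1 - p - q) (hr0 : 0 ≤ r)
    (hρ : ρ = p / q)
    (hp₀ : 0 < p₀) (hq₀ : 0 < q₀) (hs₀ : 0 < s₀) (hr₀ : 0 ≤ r₀)
    (hsum : p₀ + q₀ + r₀ + s₀ = 1) (hN : 1 < N)
    (hω₀ : ω₀ = ((min 1 ρ) ^ N - (max 1 ρ) ^ N) * (1 - r₀) +
      ((max 1 ρ) ^ (N - 1) - (min 1 ρ) ^ (N - 1)) * (ρ * q₀ + p₀)) :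
    ω₀ ^ 2 - 4 * p₀ * q₀ * (1 - ρ) ^ 2 * ρ ^ (N - 1) > 0 := by
  have hρ0 : 0 < ρ := by rw [hρ]; positivity
  have hρne : ρ ≠ 1 := by
    rw [hρ]
    intro h
    exact hne ((div_eq_one_iff_eq hq.ne').mp h)
  obtain ⟨m, rfl⟩ : ∃ m, N = m + 1 := ⟨N - 1, (Nat.succ_pred_eq_of_pos (by omega)).symm⟩
  have hm : 1 ≤ m := by omega
  simp only [Nat.add_sub_cancel] at hω₀ ⊢
  have ht : 0 < ρ ^ m := pow_pos hρ0 m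
  have key : ∀ X Y Z : ℝ, 0 < X → 0 < Y → 0 < Z →
      (-(X + Y + Z)) ^ 2 - 4 * (X * Y) > 0 := by
    intro X Y Z hX hY hZ
    nlinarith [sq_nonneg (X - Y), mul_pos hX hZ, mul_pos hY hZ, sq_nonneg Z]
  rcases lt_or_gt_of_ne hρne with hlt | hgt
  · have h1 : min 1 ρ = ρ := min_eq_right hlt.le
    have h2 : max 1 ρ = 1 := max_eq_left hlt.le
    have htlt : ρ ^ m < 1 := pow_lt_one₀ hρ0.le hlt (by omega)
    have hz : 0 < (1 - ρ ^ m * ρ) * s₀ := by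
      have : ρ ^ m * ρ < 1 := by nlinarith
      nlinarith
    rw [h1, h2] at hω₀
    have hω : ω₀ = -(q₀ * (1 - ρ) + p₀ * ρ ^ m * (1 - ρ) + (1 - ρ ^ m * ρ) * s₀) := by
      rw [hω₀]; ring_nf; nlinarith [hsum]
    have heq : 4 * p₀ * q₀ * (1 - ρ) ^ 2 * ρ ^ m
        = 4 * ((q₀ * (1 - ρ)) * (p₀ * ρ ^ m * (1 - ρ))) := by ring
    rw [hω, heq]
    exact key _ _ _ (mul_pos hq₀ (by linarith)) (mul_pos (mul_pos hp₀ ht) (by linarith)) hz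
  · have h1 : min 1 ρ = 1 := min_eq_left hgt.le
    have h2 : max 1 ρ = ρ := max_eq_right hgt.le
    have htgt : 1 < ρ ^ m := one_lt_pow₀ hgt (by omega)
    have hz : 0 < (ρ ^ m * ρ - 1) * s₀ := by
      have : 1 < ρ ^ m * ρ := by nlinarith
      nlinarith
    rw [h1, h2] at hω₀
    have hω : ω₀ = -(q₀ * (ρ - 1) + p₀ * ρ ^ m * (ρ - 1) + (ρ ^ m * ρ - 1) * s₀) := by
      rw [hω₀]; ring_nf; nlinarith [hsum]
    have heq : 4 * p₀ * q₀ * (1 - ρ) ^ 2 * ρ ^ m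
        = 4 * ((q₀ * (ρ - 1)) * (p₀ * ρ ^ m * (ρ - 1))) := by ring
    rw [hω, heq]
    exact key _ _ _ (mul_pos hq₀ (by linarith)) (mul_pos (mul_pos hp₀ ht) (by linarith)) hz
end

section
/- With notation as above (p ≠ q, ρ = p/q, λ₁ = max(1,ρ), λ₂ = min(1,ρ), barrier parameters p₀,q₀,r₀,s₀ summing to 1 with p₀q₀s₀ > 0, N > 1, ω₀ = (λ₂^N - λ₁^N)(1-r₀) + (λ₁^{N-1}-λ₂^{N-1})(ρq₀+p₀)), the roots ξ₁, ξ₂ of q₀ξ² + (ω₀/|1-ρ|)ξ + p₀ρ^{N-1} = 0 satisfy ξ₁ > 1 > ξ₂ > 0. -/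
/-!
Dividing ω₀ by |1 - ρ| turns both cases ρ < 1 and ρ > 1 into the same expression in the
geometric sums G n = ∑_{i<n} ρ^i, and with G N = G (N-1) + ρ^(N-1) = 1 + ρ G (N-1) the
quadratic evaluated at ξ = 1 collapses to -s₀ G N < 0. A quadratic with positive leading
coefficient, positive value at 0 and negative value at 1 has one root in (0, 1) and one
root in (1, ∞).
-/

open Finset

theorem exists_quadratic_roots_of_pos_of_neg_at_one {a b c : ℝ} (ha : 0 < a) (hc : 0 < c)
    (h1 : a + b + c < 0) :
    ∃ ξ₁ ξ₂ : ℝ, ξ₁ > 1 ∧ 1 > ξ₂ ∧ ξ₂ > 0 ∧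
      a * ξ₁ ^ 2 + b * ξ₁ + c = 0 ∧ a * ξ₂ ^ 2 + b * ξ₂ + c = 0 ∧
      ∀ ξ : ℝ, a * ξ ^ 2 + b * ξ + c = 0 → ξ = ξ₁ ∨ ξ = ξ₂ := by
  have hD : 0 < discrim a b c := by
    rw [discrim]
    nlinarith [sq_nonneg (a - c),
      mul_pos (by linarith : 0 < -b - (a + c)) (by linarith : 0 < -b + (a + c))]
  set s := √(discrim a b c)
  have hs2 : discrim a b c = s * s := (Real.mul_self_sqrt hD.le).symm
  have hs : 0 < s := Real.sqrt_pos.mpr hD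
  have hroots (ξ : ℝ) :
      a * ξ ^ 2 + b * ξ + c = 0 ↔ ξ = (-b + s) / (2 * a) ∨ ξ = (-b - s) / (2 * a) := by
    rw [← quadratic_eq_zero_iff ha.ne' hs2, sq]
  rw [discrim] at hs2
  have hac : 0 < a * c := mul_pos ha hc
  have habc : 0 < a * -(a + b + c) := mul_pos ha (by linarith)
  have h2a : 0 < 2 * a := by linarith
  refine ⟨_, _, ?_, ?_, ?_, (hroots _).2 (.inl rfl), (hroots _).2 (.inr rfl),
    fun ξ hξ => (hroots ξ).1 hξ⟩
  · rw [gt_iff_lt, lt_div_iff₀ h2a]; nlinarith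
  · rw [gt_iff_lt, div_lt_iff₀ h2a]; nlinarith
  · rw [gt_iff_lt, lt_div_iff₀ h2a]; nlinarith

theorem min_max_pow_sub_div_abs_one_sub {ρ : ℝ} (hρ : ρ ≠ 1) (a b : ℝ) (n : ℕ) :
    (((min 1 ρ) ^ n - (max 1 ρ) ^ n) * a + ((max 1 ρ) ^ (n - 1) - (min 1 ρ) ^ (n - 1)) * b)
        / |1 - ρ| =
      b * ∑ i ∈ range (n - 1), ρ ^ i - a * ∑ i ∈ range n, ρ ^ i := by
  have hρ' : ρ - 1 ≠ 0 := sub_ne_zero.mpr hρ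
  rw [geom_sum_eq hρ, geom_sum_eq hρ]
  rcases hρ.lt_or_gt with hlt | hgt
  · rw [min_eq_right hlt.le, max_eq_left hlt.le, abs_of_pos (by linarith)]
    field_simp
    ring
  · rw [min_eq_left hgt.le, max_eq_right hgt.le, abs_of_neg (by linarith)]
    field_simp
    ring

theorem add_geom_sum_combination_eq {ρ p₀ q₀ r₀ : ℝ} {n : ℕ} (hn : n ≠ 0) :
    q₀ + ((ρ * q₀ + p₀) * ∑ i ∈ range (n - 1), ρ ^ i - (1 - r₀) * ∑ i ∈ range n, ρ ^ i)
        + p₀ * ρ ^ (n - 1) =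
      (p₀ + q₀ + r₀ - 1) * ∑ i ∈ range n, ρ ^ i := by
  obtain ⟨m, rfl⟩ := Nat.exists_eq_succ_of_ne_zero hn
  have hsucc := geom_sum_succ (x := ρ) (n := m)
  rw [sum_range_succ] at hsucc ⊢
  simp only [Nat.succ_sub_one]
  linear_combination (-q₀) * hsucc

theorem stmt_15_general (p q ρ p₀ q₀ r₀ s₀ ω₀ : ℝ) (N : ℕ)
    (hp : 0 < p) (hq : 0 < q) (hne : p ≠ q)
    (hρ : ρ = p / q)
    (hp₀ : 0 < p₀) (hq₀ : 0 < q₀) (hs₀ : 0 < s₀)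
    (hsum : p₀ + q₀ + r₀ + s₀ = 1) (hN : 1 < N)
    (hω₀ : ω₀ = ((min 1 ρ) ^ N - (max 1 ρ) ^ N) * (1 - r₀) +
      ((max 1 ρ) ^ (N - 1) - (min 1 ρ) ^ (N - 1)) * (ρ * q₀ + p₀)) :
    ∃ ξ₁ ξ₂ : ℝ, ξ₁ > 1 ∧ 1 > ξ₂ ∧ ξ₂ > 0 ∧
      q₀ * ξ₁ ^ 2 + (ω₀ / |1 - ρ|) * ξ₁ + p₀ * ρ ^ (N - 1) = 0 ∧
      q₀ * ξ₂ ^ 2 + (ω₀ / |1 - ρ|) * ξ₂ + p₀ * ρ ^ (N - 1) = 0 ∧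
      ∀ ξ : ℝ, q₀ * ξ ^ 2 + (ω₀ / |1 - ρ|) * ξ + p₀ * ρ ^ (N - 1) = 0 → ξ = ξ₁ ∨ ξ = ξ₂ := by
  have hρpos : 0 < ρ := hρ ▸ div_pos hp hq
  have hρne : ρ ≠ 1 := hρ ▸ div_ne_one_of_ne hne
  have hN0 : N ≠ 0 := by omega
  apply exists_quadratic_roots_of_pos_of_neg_at_one hq₀ (by positivity)
  rw [hω₀, min_max_pow_sub_div_abs_one_sub hρne, add_geom_sum_combination_eq hN0]
  nlinarith [geom_sum_pos hρpos.le hN0]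

theorem stmt_15 (p q r ρ p₀ q₀ r₀ s₀ ω₀ : ℝ) (N : ℕ)
    (hp : 0 < p) (hq : 0 < q) (hne : p ≠ q) (hr : r = 1 - p - q) (hr0 : 0 ≤ r)
    (hρ : ρ = p / q)
    (hp₀ : 0 < p₀) (hq₀ : 0 < q₀) (hs₀ : 0 < s₀) (hr₀ : 0 ≤ r₀)
    (hsum : p₀ + q₀ + r₀ + s₀ = 1) (hN : 1 < N)
    (hω₀ : ω₀ = ((min 1 ρ) ^ N - (max 1 ρ) ^ N) * (1 - r₀) +
      ((max 1 ρ) ^ (N - 1) - (min 1 ρ) ^ (N - 1)) * (ρ * q₀ + p₀)) :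
    ∃ ξ₁ ξ₂ : ℝ, ξ₁ > 1 ∧ 1 > ξ₂ ∧ ξ₂ > 0 ∧
      q₀ * ξ₁ ^ 2 + (ω₀ / |1 - ρ|) * ξ₁ + p₀ * ρ ^ (N - 1) = 0 ∧
      q₀ * ξ₂ ^ 2 + (ω₀ / |1 - ρ|) * ξ₂ + p₀ * ρ ^ (N - 1) = 0 ∧
      ∀ ξ : ℝ, q₀ * ξ ^ 2 + (ω₀ / |1 - ρ|) * ξ + p₀ * ρ ^ (N - 1) = 0 → ξ = ξ₁ ∨ ξ = ξ₂ :=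
  stmt_15_general p q ρ p₀ q₀ r₀ s₀ ω₀ N hp hq hne hρ hp₀ hq₀ hs₀ hsum hN hω₀
end
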